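/- arXiv:2510.17226 — 5 statements merged into one kernel-verified Lean document; each statement's English description precedes it below -/
import Mathlib

section
/- Let M = (I − (I−R)P)^{-1} R with R diagonal with entries in (0,1] and P row-stochastic nonnegative. Then all entries of M lie in [0,1]. -/
/-!
With `Q = (1 - R) P`, the matrix `Q` is nonnegative with row sums `1 - αᵢ < 1`. A discrete
minimum principle (look at the smallest entry of `v`) shows that `(1 - Q) v ≥ 0` forces `v ≥ 0`;
this makes `1 - Q` invertible with a nonnegative inverse. Since `(1 - Q) 𝟙 = α = R 𝟙`, we get
`M 𝟙 = 𝟙`, so `M` is row-stochastic and its entries lie in `[0, 1]`.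
-/

namespace Matrix

variable {ι K : Type*} [Fintype ι] [DecidableEq ι]

theorem diagonal_mulVec_one [NonAssocSemiring K] (d : ι → K) : diagonal d *ᵥ 1 = d := by
  ext i
  rw [mulVec_diagonal, Pi.one_apply, mul_one]

theorem nonneg_of_one_sub_mulVec_nonneg [Ring K] [LinearOrder K] [IsStrictOrderedRing K]
    {Q : Matrix ι ι K} (hQ : ∀ i j, 0 ≤ Q i j) (hrow : ∀ i, ∑ j, Q i j < 1)
    {v : ι → K} (hv : 0 ≤ (1 - Q) *ᵥ v) : 0 ≤ v := by
  cases isEmpty_or_nonempty ι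
  · exact fun i => isEmptyElim i
  obtain ⟨i₀, hmin⟩ := Finite.exists_min v
  have key : ((1 - Q) *ᵥ v) i₀ ≤ (1 - ∑ j, Q i₀ j) * v i₀ :=
    calc ((1 - Q) *ᵥ v) i₀ = v i₀ - ∑ j, Q i₀ j * v j := by
          rw [sub_mulVec, one_mulVec]
          rfl
      _ ≤ v i₀ - ∑ j, Q i₀ j * v i₀ := by
          gcongr with j
          exacts [hQ i₀ j, hmin j]
      _ = (1 - ∑ j, Q i₀ j) * v i₀ := by rw [sub_mul, one_mul, Finset.sum_mul]
  have hvi₀ : 0 ≤ v i₀ := nonneg_of_mul_nonneg_right ((hv i₀).trans key) (sub_pos.2 (hrow i₀))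
  exact fun i => hvi₀.trans (hmin i)

variable [Field K] [LinearOrder K] [IsStrictOrderedRing K] {Q : Matrix ι ι K}

theorem det_one_sub_ne_zero (hQ : ∀ i j, 0 ≤ Q i j) (hrow : ∀ i, ∑ j, Q i j < 1) :
    (1 - Q).det ≠ 0 := by
  rw [Ne, ← exists_mulVec_eq_zero_iff]
  rintro ⟨v, hv_ne, hv⟩
  have hv_nonneg : 0 ≤ v := nonneg_of_one_sub_mulVec_nonneg hQ hrow hv.ge
  have hv_nonpos : 0 ≤ -v :=
    nonneg_of_one_sub_mulVec_nonneg hQ hrow (by rw [mulVec_neg, hv, neg_zero])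
  exact hv_ne (le_antisymm (neg_nonneg.1 hv_nonpos) hv_nonneg)

theorem inv_one_sub_apply_nonneg (hQ : ∀ i j, 0 ≤ Q i j) (hrow : ∀ i, ∑ j, Q i j < 1)
    (i j : ι) : 0 ≤ (1 - Q)⁻¹ i j := by
  have hcol : (1 - Q) *ᵥ ((1 - Q)⁻¹ *ᵥ Pi.single j 1) = Pi.single j 1 := by
    rw [mulVec_mulVec, mul_nonsing_inv _ (det_one_sub_ne_zero hQ hrow).isUnit, one_mulVec]
  have hcol_nonneg := nonneg_of_one_sub_mulVec_nonneg hQ hrow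
    (hcol ▸ Pi.single_nonneg.2 zero_le_one) i
  simpa [mulVec_single_one] using hcol_nonneg

theorem inv_one_sub_mul_diagonal_mem_rowStochastic (hQ : ∀ i j, 0 ≤ Q i j) {d : ι → K}
    (hd : ∀ i, 0 < d i) (hQd : Q *ᵥ 1 + d = 1) :
    (1 - Q)⁻¹ * diagonal d ∈ rowStochastic K ι := by
  have hrow : ∀ i, ∑ j, Q i j < 1 := fun i => by
    have hi : ∑ j, Q i j + d i = 1 := by simpa [mulVec, dotProduct] using congrFun hQd i
    linarith [hd i]
  have hd_eq : d = (1 - Q) *ᵥ 1 := by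
    rw [sub_mulVec, one_mulVec]
    exact eq_sub_of_add_eq' hQd
  refine mem_rowStochastic.2 ⟨fun i j => ?_, ?_⟩
  · rw [mul_diagonal]
    exact mul_nonneg (inv_one_sub_apply_nonneg hQ hrow i j) (hd j).le
  · rw [← mulVec_mulVec, diagonal_mulVec_one, hd_eq, mulVec_mulVec,
      nonsing_inv_mul _ (det_one_sub_ne_zero hQ hrow).isUnit, one_mulVec]

end Matrix

open Matrix

theorem stmt_2 {n : ℕ} (α : Fin n → ℝ) (hα : ∀ i, 0 < α i ∧ α i ≤ 1)
    (P : Matrix (Fin n) (Fin n) ℝ) (hP : ∀ i j, 0 ≤ P i j)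
    (hrow : ∀ i, ∑ j, P i j = 1)
    (R : Matrix (Fin n) (Fin n) ℝ) (hR : R = Matrix.diagonal α)
    (M : Matrix (Fin n) (Fin n) ℝ) (hM : M = (1 - (1 - R) * P)⁻¹ * R) :
    ∀ i j, 0 ≤ M i j ∧ M i j ≤ 1 := by
  subst hR hM
  have hP_stoch : P ∈ rowStochastic ℝ (Fin n) := mem_rowStochastic_iff_sum.2 ⟨hP, hrow⟩
  have hQ : ∀ i j, 0 ≤ ((1 - diagonal α) * P) i j := fun i j => by
    rw [sub_mul, one_mul, Matrix.sub_apply, diagonal_mul, ← one_sub_mul]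
    exact mul_nonneg (sub_nonneg.2 (hα i).2) (hP i j)
  have hQα : ((1 - diagonal α) * P) *ᵥ 1 + α = 1 := by
    rw [← mulVec_mulVec, one_vecMul_of_mem_rowStochastic hP_stoch, sub_mulVec, one_mulVec,
      diagonal_mulVec_one, sub_add_cancel]
  have hM := inv_one_sub_mul_diagonal_mem_rowStochastic hQ (fun i => (hα i).1) hQα
  exact fun i j => ⟨nonneg_of_mem_rowStochastic hM, le_one_of_mem_rowStochastic hM⟩
end

section
/- Let â approximate a with uniform relative error 0 < a(i) − â(i) ≤ ε_b a(i) for all i ∈ V, where ε_b ∈ (0,1), and all a(i) > 0. If â(i) ≥ â_{<k+1>}/(1−ε_b), then i belongs to an optimal size-k set maximizing Σ_{j∈T} a(j). -/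
/-!
Write `θ = â_{<k+1>}`, so at most `k` entries of `â` exceed `θ`. From `(1 - ε_b) a ≤ â < a` and
`(1 - ε_b) â(i) ≥ θ`, every `u` with `a(u) > a(i)` satisfies
`â(u) ≥ (1 - ε_b) a(u) > (1 - ε_b) a(i) > (1 - ε_b) â(i) ≥ θ`, and also `â(i) > θ`. Hence fewer
than `k` elements beat `i` under `a`, and an exchange argument puts `i` into an optimal `k`-set:
any `k`-set avoiding `i` contains some `u` with `a(u) ≤ a(i)`, and swapping `u` for `i` does not
decrease the sum.
-/

/-- The `j`-th largest value of `f` (1-indexed): the element at position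
`card V - j` of the values of `f` sorted in ascending order. -/
noncomputable def kthLargest {V : Type*} [Fintype V] (f : V → ℝ) (j : ℕ) : ℝ :=
  ((Finset.univ.val.map f).sort (· ≤ ·)).getD (Fintype.card V - j) 0

open Finset

lemma List.countP_getElem_lt_le {α : Type*} [Preorder α] [DecidableLT α] {l : List α}
    (hl : l.Pairwise (· ≤ ·)) {m : ℕ} (hm : m < l.length) :
    l.countP (l[m] < ·) ≤ l.length - (m + 1) := by
  have htake : (l.take (m + 1)).countP (l[m] < ·) = 0 := by
    rw [List.countP_eq_zero]
    intro x hx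
    obtain ⟨j, hj, rfl⟩ := List.mem_take_iff_getElem.mp hx
    have hjm : l[j] ≤ l[m] := hl.rel_get_of_le (a := ⟨j, by omega⟩) (b := ⟨m, hm⟩) (by simp; omega)
    simpa using not_lt_of_ge hjm
  calc l.countP (l[m] < ·)
      = (l.take (m + 1)).countP (l[m] < ·)
        + (l.drop (m + 1)).countP (l[m] < ·) := by
        rw [← List.countP_append, List.take_append_drop]
    _ ≤ l.length - (m + 1) := by
        rw [htake, zero_add, ← List.length_drop]
        exact List.countP_le_length

lemma card_filter_kthLargest_lt_le {V : Type*} [Fintype V] (f : V → ℝ) (k : ℕ) :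
    #{v | kthLargest f (k + 1) < f v} ≤ k := by
  set l := (univ.val.map f).sort (· ≤ ·) with hl
  have hlen : l.length = Fintype.card V := by simp [l]
  rcases le_or_gt (Fintype.card V) k with hk | hk
  · exact (card_filter_le _ _).trans (by simpa using hk)
  have hidx : Fintype.card V - (k + 1) < l.length := by omega
  have hθ : kthLargest f (k + 1) = l[Fintype.card V - (k + 1)] :=
    List.getD_eq_getElem _ _ hidx
  have hcount : #{v | kthLargest f (k + 1) < f v} = l.countP (kthLargest f (k + 1) < ·) := by
    rw [← Multiset.coe_countP, hl, Multiset.sort_eq, Multiset.countP_map]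
    rfl
  calc #{v | kthLargest f (k + 1) < f v}
      ≤ l.length - (Fintype.card V - (k + 1) + 1) := by
        rw [hcount, hθ]
        exact List.countP_getElem_lt_le (Multiset.pairwise_sort _ _) hidx
    _ = k := by omega

section Exchange

variable {V α : Type*} [LinearOrder α] (a : V → α)

lemma exists_mem_le_of_card_filter_lt [Fintype V] {U : Finset V} {i : V}
    (hU : #{u | a i < a u} < #U) : ∃ u ∈ U, a u ≤ a i := by
  by_contra! h
  exact hU.not_ge (card_le_card fun u hu => by simpa using h u hu)

lemma sum_le_sum_insert_erase [DecidableEq V] [AddCommMonoid α] [IsOrderedAddMonoid α]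
    {U : Finset V} {i u : V} (hu : u ∈ U) (hiU : i ∉ U) (hle : a u ≤ a i) :
    ∑ v ∈ U, a v ≤ ∑ v ∈ insert i (U.erase u), a v := by
  rw [sum_insert fun h => hiU (mem_of_mem_erase h), ← sum_erase_add U a hu, add_comm]
  gcongr

theorem exists_card_eq_forall_sum_le_and_mem [Fintype V] [DecidableEq V] [AddCommMonoid α]
    [IsOrderedAddMonoid α] {k : ℕ} (hk : k ≤ Fintype.card V) {i : V}
    (hi : #{u | a i < a u} < k) :
    ∃ T : Finset V, #T = k ∧ (∀ U : Finset V, #U = k → ∑ v ∈ U, a v ≤ ∑ v ∈ T, a v) ∧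
      i ∈ T := by
  obtain ⟨T₀, hiT₀, -, hT₀⟩ := exists_subsuperset_card_eq (n := k)
    (singleton_subset_iff.2 (mem_univ i)) (by rw [card_singleton]; omega) (by simpa using hk)
  obtain ⟨T, hT, hTmax⟩ := exists_max_image {T ∈ powersetCard k univ | i ∈ T}
    (fun T => ∑ v ∈ T, a v) ⟨T₀, by simpa [hT₀] using hiT₀⟩
  simp only [mem_filter, mem_powersetCard_univ] at hT
  refine ⟨T, hT.1, fun U hU => ?_, hT.2⟩
  by_cases hiU : i ∈ U
  · exact hTmax U (by simp [hU, hiU])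
  obtain ⟨u, hu, hle⟩ := exists_mem_le_of_card_filter_lt a (hU ▸ hi)
  have hcard : #(insert i (U.erase u)) = k := by
    rw [card_insert_of_notMem fun h => hiU (mem_of_mem_erase h), card_erase_of_mem hu, hU]
    omega
  calc ∑ v ∈ U, a v ≤ ∑ v ∈ insert i (U.erase u), a v := sum_le_sum_insert_erase a hu hiU hle
    _ ≤ ∑ v ∈ T, a v := hTmax _ (by simp [hcard])

end Exchange

theorem stmt_9_general {V : Type*} [Fintype V] [DecidableEq V]
    (k : ℕ) (hcard : k + 1 ≤ Fintype.card V)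
    (a aHat : V → ℝ)
    (εb : ℝ) (hεb : 0 < εb ∧ εb < 1)
    (herr : ∀ i, 0 < a i - aHat i ∧ a i - aHat i ≤ εb * a i)
    (i : V) (hi : aHat i ≥ kthLargest aHat (k + 1) / (1 - εb)) :
    ∃ T : Finset V, T.card = k ∧
      (∀ U : Finset V, U.card = k → ∑ v ∈ U, a v ≤ ∑ v ∈ T, a v) ∧
      i ∈ T := by
  obtain ⟨hε0, hε1⟩ := hεb
  set θ := kthLargest aHat (k + 1)
  have hlow v : (1 - εb) * a v ≤ aHat v := by linarith [(herr v).2]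
  have hup v : aHat v < a v := by linarith [(herr v).1]
  have hθ : θ ≤ (1 - εb) * aHat i := by
    rwa [ge_iff_le, div_le_iff₀ (by linarith), mul_comm] at hi
  have hθi : θ < aHat i := by
    have hai : 0 < a i := pos_of_mul_pos_right ((herr i).1.trans_le (herr i).2) hε0.le
    have haHat : 0 < aHat i := (mul_pos (by linarith) hai).trans_le (hlow i)
    nlinarith
  have hbeat u (hu : a i < a u) : θ < aHat u := by
    nlinarith [hlow u, hup i]
  have hssub : ({u | a i < a u} : Finset V) ⊂ ({u | θ < aHat u} : Finset V) :=
    (ssubset_iff_of_subset fun u hu => by simpa using hbeat u (by simpa using hu)).2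
      ⟨i, by simpa using hθi, by simp⟩
  exact exists_card_eq_forall_sum_le_and_mem a (by omega)
    ((card_lt_card hssub).trans_le (card_filter_kthLargest_lt_le aHat k))

theorem stmt_9 {V : Type*} [Fintype V] [DecidableEq V]
    (k : ℕ) (hcard : k + 1 ≤ Fintype.card V)
    (a aHat : V → ℝ) (ha : ∀ i, 0 < a i)
    (εb : ℝ) (hεb : 0 < εb ∧ εb < 1)
    (herr : ∀ i, 0 < a i - aHat i ∧ a i - aHat i ≤ εb * a i)
    (i : V) (hi : aHat i ≥ kthLargest aHat (k + 1) / (1 - εb)) :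
    ∃ T : Finset V, T.card = k ∧
      (∀ U : Finset V, U.card = k → ∑ v ∈ U, a v ≤ ∑ v ∈ T, a v) ∧
      i ∈ T :=
  stmt_9_general k hcard a aHat εb hεb herr i hi
end

section
/- One step of the asynchronous push operation preserves the invariant: if Δ − Δ̂ = (1−s) ⊙ Mᵀ r, where M = (I−(I−R)P)^{-1}R, and we update Δ̂' = Δ̂ + r(i)·(1−s)⊙(R e_i) and r' = r − r(i)(I − Pᵀ(I−R)) e_i, then Δ − Δ̂' = (1−s) ⊙ Mᵀ r'. -/
open Matrix

/-
Write `A = 1 - (1 - R) P`. The matrix `(1 - R) P` has nonnegative rows summing to `1 - α_i < 1`,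
so `A` is strictly diagonally dominant and hence invertible (Gershgorin). Then
`Mᵀ Aᵀ = (A A⁻¹ R)ᵀ = Rᵀ = R`, so the residual change `r(i) Aᵀ e_i` is mapped by `Mᵀ` to exactly
the increment `r(i) R e_i` of `Δ̂`, which preserves the invariant.
-/

theorem Matrix.det_one_sub_ne_zero_of_sum_norm_lt_one {ι K : Type*} [Fintype ι] [DecidableEq ι]
    [NormedField K] (N : Matrix ι ι K) (hN : ∀ i, ∑ j, ‖N i j‖ < 1) : (1 - N).det ≠ 0 := by
  refine det_ne_zero_of_sum_row_lt_diag fun k => ?_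
  have hrow := hN k
  rw [← Finset.sum_erase_add _ _ (Finset.mem_univ k)] at hrow
  calc ∑ j ∈ Finset.univ.erase k, ‖(1 - N) k j‖ = ∑ j ∈ Finset.univ.erase k, ‖N k j‖ :=
        Finset.sum_congr rfl fun j hj => by
          rw [sub_apply, one_apply_ne (Finset.ne_of_mem_erase hj).symm, zero_sub, norm_neg]
    _ < 1 - ‖N k k‖ := by linarith
    _ ≤ ‖(1 - N) k k‖ := by
        simpa only [sub_apply, one_apply_eq, norm_one] using norm_sub_norm_le (1 : K) (N k k)

theorem det_one_sub_one_sub_diagonal_mul_ne_zero {ι : Type*} [Fintype ι] [DecidableEq ι]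
    (α : ι → ℝ) (hα : ∀ j, 0 < α j ∧ α j ≤ 1) (P : Matrix ι ι ℝ) (hP : ∀ i j, 0 ≤ P i j)
    (hrow : ∀ i, ∑ j, P i j = 1) :
    (1 - (1 - diagonal α) * P).det ≠ 0 := by
  refine Matrix.det_one_sub_ne_zero_of_sum_norm_lt_one _ fun i => ?_
  obtain ⟨hα_pos, hα_le⟩ := hα i
  calc ∑ j, ‖((1 - diagonal α) * P) i j‖ = ∑ j, (1 - α i) * P i j := by
        refine Finset.sum_congr rfl fun j _ => ?_
        rw [Matrix.sub_mul, Matrix.one_mul, Matrix.sub_apply, diagonal_mul, ← one_sub_mul,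
          Real.norm_of_nonneg (mul_nonneg (by linarith) (hP i j))]
    _ = 1 - α i := by rw [← Finset.mul_sum, hrow, mul_one]
    _ < 1 := by linarith

theorem Matrix.transpose_inv_mul_mul_transpose {ι R : Type*} [Fintype ι] [DecidableEq ι]
    [CommRing R] {A B : Matrix ι ι R} (hA : IsUnit A.det) (hB : Bᵀ = B) :
    (A⁻¹ * B)ᵀ * Aᵀ = B := by
  rw [← transpose_mul, mul_nonsing_inv_cancel_left A B hA, hB]

theorem stmt_12_general {n : ℕ} (α : Fin n → ℝ) (hα : ∀ j, 0 < α j ∧ α j ≤ 1)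
    (P : Matrix (Fin n) (Fin n) ℝ) (hP : ∀ i j, 0 ≤ P i j)
    (hrow : ∀ i, ∑ j, P i j = 1)
    (R : Matrix (Fin n) (Fin n) ℝ) (hR : R = Matrix.diagonal α)
    (M : Matrix (Fin n) (Fin n) ℝ) (hM : M = (1 - (1 - R) * P)⁻¹ * R)
    (s : Fin n → ℝ)
    (Δ ΔHat ΔHat' r r' : Fin n → ℝ) (i : Fin n)
    (hinv : ∀ v, Δ v - ΔHat v = (1 - s v) * (Mᵀ).mulVec r v)
    (hΔHat' : ∀ v, ΔHat' v = ΔHat v + r i * ((1 - s v) * R.mulVec (Pi.single i 1) v))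
    (hr' : r' = r - r i • (1 - Pᵀ * (1 - R)).mulVec (Pi.single i 1)) :
    ∀ v, Δ v - ΔHat' v = (1 - s v) * (Mᵀ).mulVec r' v := by
  have hRT : Rᵀ = R := hR ▸ diagonal_transpose α
  have hdet : IsUnit (1 - (1 - R) * P).det :=
    isUnit_iff_ne_zero.mpr (hR ▸ det_one_sub_one_sub_diagonal_mul_ne_zero α hα P hP hrow)
  have hAT : (1 - (1 - R) * P)ᵀ = 1 - Pᵀ * (1 - R) := by
    rw [transpose_sub, transpose_one, transpose_mul, transpose_sub, transpose_one, hRT]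
  have hMA : Mᵀ * (1 - Pᵀ * (1 - R)) = R := by
    rw [hM, ← hAT]
    exact Matrix.transpose_inv_mul_mul_transpose hdet hRT
  have hpush : Mᵀ *ᵥ r' = Mᵀ *ᵥ r - r i • R *ᵥ Pi.single i 1 := by
    rw [hr', mulVec_sub, mulVec_smul, mulVec_mulVec, hMA]
  intro v
  rw [hΔHat', hpush, Pi.sub_apply, Pi.smul_apply, smul_eq_mul]
  linear_combination hinv v

theorem stmt_12 {n : ℕ} (α : Fin n → ℝ) (hα : ∀ j, 0 < α j ∧ α j ≤ 1)
    (P : Matrix (Fin n) (Fin n) ℝ) (hP : ∀ i j, 0 ≤ P i j)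
    (hrow : ∀ i, ∑ j, P i j = 1)
    (R : Matrix (Fin n) (Fin n) ℝ) (hR : R = Matrix.diagonal α)
    (M : Matrix (Fin n) (Fin n) ℝ) (hM : M = (1 - (1 - R) * P)⁻¹ * R)
    (s : Fin n → ℝ) (hs : ∀ v, 0 ≤ s v ∧ s v ≤ 1)
    (Δ ΔHat ΔHat' r r' : Fin n → ℝ) (i : Fin n)
    (hΔ : ∀ v, Δ v = (1 - s v) * (Mᵀ).mulVec (fun _ => 1) v)
    (hinv : ∀ v, Δ v - ΔHat v = (1 - s v) * (Mᵀ).mulVec r v)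
    (hΔHat' : ∀ v, ΔHat' v = ΔHat v + r i * ((1 - s v) * R.mulVec (Pi.single i 1) v))
    (hr' : r' = r - r i • (1 - Pᵀ * (1 - R)).mulVec (Pi.single i 1)) :
    ∀ v, Δ v - ΔHat' v = (1 - s v) * (Mᵀ).mulVec r' v :=
  stmt_12_general α hα P hP hrow R hR M hM s Δ ΔHat ΔHat' r r' i hinv hΔHat' hr'
end

section
/- One step of the backward asynchronous push preserves its invariant: with M = (I−(I−R)P)^{-1}R, if Δ(v) − (Δ̂(v) + δ) = r_aᵀ M R^{-1} r_s, then after updating δ' = δ + r_a(u)·r_s(u) and r_s' = r_s − r_s(u)(I − (I−R)P) e_u, we have Δ(v) − (Δ̂(v) + δ') = r_aᵀ M R^{-1} r_s'. -/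
/-!
Writing `A = I - (I - R)P`, the matrix `M R⁻¹ = A⁻¹` is the resolvent of the push operator, so
`A⁻¹` applied to the correction `r_s(u) A e_u` is just `r_s(u) e_u`: the update of `r_s` lowers
`r_aᵀ A⁻¹ r_s` by exactly `r_a(u) r_s(u)`, which is what is added to `δ`. The only analytic input
is that `A` is invertible, which holds because every row of `(I - R)P` has absolute sum
`1 - α_i < 1`, so `(I - R)P` has ∞-operator norm below one.
-/

open Matrix

section RowSum

variable {ι : Type*} [Fintype ι] [DecidableEq ι]

attribute [local instance] Matrix.linftyOpNormedRing

theorem Matrix.isUnit_one_sub_of_sum_abs_lt_one (B : Matrix ι ι ℝ)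
    (hB : ∀ i, ∑ j, |B i j| < 1) : IsUnit (1 - B) := by
  -- The ∞-operator norm induces the product uniformity, but instance search cannot see this.
  have : HasSummableGeomSeries (Matrix ι ι ℝ) :=
    @instHasSummableGeomSeriesOfCompleteSpace _ _ (inferInstanceAs (CompleteSpace (ι → ι → ℝ)))
  refine isUnit_one_sub_of_norm_lt_one ?_
  suffices ‖B‖₊ < 1 by exact_mod_cast this
  rw [linfty_opNNNorm_def, Finset.sup_lt_iff zero_lt_one]
  intro i _
  rw [← NNReal.coe_lt_coe, NNReal.coe_sum]
  simpa only [coe_nnnorm, Real.norm_eq_abs, NNReal.coe_one] using hB i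

theorem Matrix.sum_abs_one_sub_diagonal_mul_lt_one {α : ι → ℝ} (hα : ∀ j, 0 < α j ∧ α j ≤ 1)
    {P : Matrix ι ι ℝ} (hP : ∀ i j, 0 ≤ P i j) (hrow : ∀ i, ∑ j, P i j = 1) (i : ι) :
    ∑ j, |((1 - diagonal α) * P) i j| < 1 := by
  have hentry : ∀ j, ((1 - diagonal α) * P) i j = (1 - α i) * P i j := by
    intro j
    simp only [sub_mul, one_mul, sub_apply, diagonal_mul]
  have hsum : ∑ j, |((1 - diagonal α) * P) i j| = 1 - α i := by
    simp_rw [hentry, abs_of_nonneg (mul_nonneg (sub_nonneg.2 (hα i).2) (hP i _)),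
      ← Finset.mul_sum, hrow i, mul_one]
  linarith [(hα i).1]

end RowSum

theorem Matrix.dotProduct_inv_mulVec_sub_smul_mulVec_single {ι : Type*} [Fintype ι]
    [DecidableEq ι] {A : Matrix ι ι ℝ} (hA : IsUnit A.det) (ra rs : ι → ℝ) (u : ι) :
    ra ⬝ᵥ A⁻¹ *ᵥ (rs - rs u • A *ᵥ Pi.single u 1) = ra ⬝ᵥ A⁻¹ *ᵥ rs - ra u * rs u := by
  rw [mulVec_sub, mulVec_smul, mulVec_mulVec, nonsing_inv_mul _ hA, one_mulVec,
    dotProduct_sub, dotProduct_smul, dotProduct_single_one, smul_eq_mul, mul_comm]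

theorem stmt_13 {n : ℕ} (α : Fin n → ℝ) (hα : ∀ j, 0 < α j ∧ α j ≤ 1)
    (P : Matrix (Fin n) (Fin n) ℝ) (hP : ∀ i j, 0 ≤ P i j)
    (hrow : ∀ i, ∑ j, P i j = 1)
    (R : Matrix (Fin n) (Fin n) ℝ) (hR : R = Matrix.diagonal α)
    (M : Matrix (Fin n) (Fin n) ℝ) (hM : M = (1 - (1 - R) * P)⁻¹ * R)
    (ra rs rs' : Fin n → ℝ) (u : Fin n)
    (Δv ΔHatv δ δ' : ℝ)
    (hinv : Δv - (ΔHatv + δ) = ra ⬝ᵥ (M * R⁻¹).mulVec rs)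
    (hδ' : δ' = δ + ra u * rs u)
    (hrs' : rs' = rs - rs u • (1 - (1 - R) * P).mulVec (Pi.single u 1)) :
    Δv - (ΔHatv + δ') = ra ⬝ᵥ (M * R⁻¹).mulVec rs' := by
  have hRdet : IsUnit R.det := by
    rw [hR, det_diagonal]
    exact isUnit_iff_ne_zero.2 (Finset.prod_ne_zero_iff.2 fun j _ => (hα j).1.ne')
  have hAdet : IsUnit (1 - (1 - R) * P).det := by
    rw [← isUnit_iff_isUnit_det, hR]
    exact isUnit_one_sub_of_sum_abs_lt_one _ (sum_abs_one_sub_diagonal_mul_lt_one hα hP hrow)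
  have hMR : M * R⁻¹ = (1 - (1 - R) * P)⁻¹ := by
    rw [hM, Matrix.mul_assoc, mul_nonsing_inv _ hRdet, Matrix.mul_one]
  rw [hMR] at hinv ⊢
  rw [hrs', dotProduct_inv_mulVec_sub_smul_mulVec_single hAdet, ← hinv, hδ']
  ring
end

section
/- Matrix identity: for R = diag(α_i) with α_i ∈ (0,1), D an invertible diagonal matrix, A a matrix with D row sums (i.e., P = D^{-1}A row-stochastic), L = D − A, and Q = D(I−R)^{-1}R, we have (I − (I−R)D^{-1}A)^{-1} R = (Q + L)^{-1} Q. -/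
/-!
`Q + L = D (1 - R)⁻¹ R + D - A` factors as `D (1 - R)⁻¹ (1 - (1 - R) D⁻¹ A)`, and its left
factor `D (1 - R)⁻¹` cancels against the same left factor of `Q = D (1 - R)⁻¹ R`.
-/

open Matrix

section

variable {m K : Type*} [Fintype m] [DecidableEq m] [CommRing K]

theorem isUnit_det_diagonal_of_isUnit {v : m → K} (hv : ∀ i, IsUnit (v i)) :
    IsUnit (diagonal v).det :=
  (isUnit_iff_isUnit_det _).mp (isUnit_diagonal.mpr (Pi.isUnit_iff.mpr hv))

theorem inv_mul_mul_cancel_left_of_isUnit_det {S : Matrix m m K} (M X : Matrix m m K)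
    (hS : IsUnit S.det) : (S * M)⁻¹ * (S * X) = M⁻¹ * X := by
  rw [Matrix.mul_inv_rev, Matrix.mul_assoc, nonsing_inv_mul_cancel_left _ _ hS]

theorem mul_inv_one_sub_mul_add_sub {D R : Matrix m m K} (A : Matrix m m K)
    (hD : IsUnit D.det) (hR : IsUnit (1 - R).det) :
    D * (1 - R)⁻¹ * R + (D - A) = D * (1 - R)⁻¹ * (1 - (1 - R) * D⁻¹ * A) := by
  have hA : D * (1 - R)⁻¹ * ((1 - R) * D⁻¹ * A) = A := by
    simp only [Matrix.mul_assoc, nonsing_inv_mul_cancel_left _ _ hR,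
      mul_nonsing_inv_cancel_left _ _ hD]
  have hD' : D * (1 - R)⁻¹ * (1 - R) = D := by
    rw [Matrix.mul_assoc, nonsing_inv_mul _ hR, Matrix.mul_one]
  rw [Matrix.mul_sub, hA, Matrix.mul_one]
  nth_rewrite 2 [← hD']
  rw [Matrix.mul_sub, Matrix.mul_one]
  abel

end

theorem stmt_17_general {n : ℕ} (d : Fin n → ℝ) (hd : ∀ i, 0 < d i)
    (D : Matrix (Fin n) (Fin n) ℝ) (hD : D = Matrix.diagonal d)
    (A : Matrix (Fin n) (Fin n) ℝ)
    (α : Fin n → ℝ) (hα : ∀ i, 0 < α i ∧ α i < 1)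
    (R : Matrix (Fin n) (Fin n) ℝ) (hR : R = Matrix.diagonal α)
    (L Q : Matrix (Fin n) (Fin n) ℝ)
    (hL : L = D - A) (hQ : Q = D * (1 - R)⁻¹ * R) :
    (1 - (1 - R) * D⁻¹ * A)⁻¹ * R = (Q + L)⁻¹ * Q := by
  have hDu : IsUnit D.det :=
    hD ▸ isUnit_det_diagonal_of_isUnit fun i => (hd i).ne'.isUnit
  have hRu : IsUnit (1 - R).det := by
    rw [hR, ← diagonal_one, diagonal_sub]
    exact isUnit_det_diagonal_of_isUnit fun i => (sub_ne_zero.mpr (hα i).2.ne').isUnit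
  have hSu : IsUnit (D * (1 - R)⁻¹).det := by
    rw [det_mul]
    exact hDu.mul (isUnit_nonsing_inv_det _ hRu)
  rw [hQ, hL, mul_inv_one_sub_mul_add_sub A hDu hRu,
    inv_mul_mul_cancel_left_of_isUnit_det _ _ hSu]

theorem stmt_17 {n : ℕ} (d : Fin n → ℝ) (hd : ∀ i, 0 < d i)
    (D : Matrix (Fin n) (Fin n) ℝ) (hD : D = Matrix.diagonal d)
    (A : Matrix (Fin n) (Fin n) ℝ) (hA : ∀ i j, 0 ≤ A i j)
    (hrow : ∀ i, ∑ j, A i j = d i)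
    (α : Fin n → ℝ) (hα : ∀ i, 0 < α i ∧ α i < 1)
    (R : Matrix (Fin n) (Fin n) ℝ) (hR : R = Matrix.diagonal α)
    (L Q : Matrix (Fin n) (Fin n) ℝ)
    (hL : L = D - A) (hQ : Q = D * (1 - R)⁻¹ * R) :
    (1 - (1 - R) * D⁻¹ * A)⁻¹ * R = (Q + L)⁻¹ * Q :=
  stmt_17_general d hd D hD A α hα R hR L Q hL hQ
end
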